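/- In any tiling of an m×(B+9m²) rectangle by 3m horizontal 1×(a_i+3m²) rectangles where each a_i + 3m² > (B+9m²)/2 is false but a_i + 3m² > B/4 + 3m² > (B+9m²)/4 holds with B = Σa_i/m, each row of the rectangle contains exactly three pieces, and the multiset of pieces in each row has lengths summing to B + 9m²; hence the a_i's in each row sum to B, giving a 3-partition. -/
import Mathlib

def rect (w h : ℕ) : Finset (ℤ × ℤ) :=
  (Finset.range w ×ˢ Finset.range h).image fun p => ((p.1 : ℤ), (p.2 : ℤ))

def hseg (v : ℤ × ℤ) (k : ℕ) : Finset (ℤ × ℤ) :=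
  (Finset.range k).image fun j : ℕ => (v.1 + (j : ℤ), v.2)

lemma mem_hseg {v : ℤ × ℤ} {k : ℕ} {x : ℤ × ℤ} :
    x ∈ hseg v k ↔ ∃ j : ℕ, j < k ∧ x = (v.1 + j, v.2) := by
  simp [hseg, eq_comm]

lemma mem_rect {w h : ℕ} {x : ℤ × ℤ} :
    x ∈ rect w h ↔ ∃ p : ℕ, p < w ∧ ∃ q : ℕ, q < h ∧ x = ((p : ℤ), (q : ℤ)) := by
  simp only [rect, Finset.mem_image, Finset.mem_product, Finset.mem_range, Prod.exists]
  constructor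
  · rintro ⟨p, q, ⟨hp, hq⟩, rfl⟩; exact ⟨p, hp, q, hq, rfl⟩
  · rintro ⟨p, hp, q, hq, rfl⟩; exact ⟨p, q, ⟨hp, hq⟩, rfl⟩

lemma hseg_card (v : ℤ × ℤ) (k : ℕ) : (hseg v k).card = k := by
  rw [hseg, Finset.card_image_of_injective _ ?_, Finset.card_range]
  intro a b h
  simpa using h


lemma arith_aux (n s B M : ℕ) (hM : 1 ≤ M)
    (h1 : s + n * M = B + 3 * M)
    (h2 : n * (B + 1) ≤ 4 * s)
    (h3 : 2 * s + n ≤ n * B) : n = 3 ∧ s = B := by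
  rcases Nat.lt_trichotomy n 3 with hlt | heq | hgt
  · exfalso
    have hb1 : n * B ≤ 2 * B := Nat.mul_le_mul_right B (by omega)
    have hb2 : n * M ≤ 2 * M := Nat.mul_le_mul_right M (by omega)
    nlinarith [h1, h3, hb1, hb2, hM]
  · subst heq
    constructor
    · rfl
    · omega
  · exfalso
    have hb1 : 4 * (B + 1) ≤ n * (B + 1) := Nat.mul_le_mul_right _ (by omega)
    have hb2 : 4 * M ≤ n * M := Nat.mul_le_mul_right M (by omega)
    nlinarith [h1, h2, hb1, hb2, hM]

/-- in any tiling of the `m × (B + 9m²)` rectangular frame by the `3m`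
horizontal pieces `1 × (aᵢ + 3m²)` (each used exactly once), every row contains exactly
three pieces, and the `aᵢ` of the pieces in each row sum to `B` — giving a 3-partition. -/
theorem stmt17 (m : ℕ) (hm : 1 ≤ m) (B : ℕ) (a : Fin (3 * m) → ℕ)
    (hpos : ∀ i, 0 < a i) (hsum : m * B = ∑ i, a i)
    (hlo : ∀ i, B < 4 * a i) (hhi : ∀ i, 2 * a i < B)
    (pos : Fin (3 * m) → ℤ × ℤ)
    (hdisj : ∀ i j : Fin (3 * m), i ≠ j →
      Disjoint (hseg (pos i) (a i + 3 * m ^ 2)) (hseg (pos j) (a j + 3 * m ^ 2)))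
    (hcover : ∀ x, x ∈ rect (B + 9 * m ^ 2) m ↔ ∃ i, x ∈ hseg (pos i) (a i + 3 * m ^ 2)) :
    ∀ y : ℤ, 0 ≤ y → y < (m : ℤ) →
      (Finset.univ.filter fun i => (pos i).2 = y).card = 3 ∧
      ∑ i ∈ Finset.univ.filter (fun i => (pos i).2 = y), a i = B := by
  intro y hy0 hym
  set w := B + 9 * m ^ 2 with hw
  set S := Finset.univ.filter (fun i => (pos i).2 = y) with hSdef
  have hrow : (Finset.range w).image (fun p : ℕ => ((p : ℤ), y))
      = S.biUnion (fun i => hseg (pos i) (a i + 3 * m ^ 2)) := by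
    ext x
    simp only [Finset.mem_image, Finset.mem_range, Finset.mem_biUnion, hSdef,
      Finset.mem_filter, Finset.mem_univ, true_and]
    constructor
    · rintro ⟨p, hp, rfl⟩
      have hx : ((p : ℤ), y) ∈ rect w m := by
        rw [mem_rect]
        refine ⟨p, hp, y.toNat, by omega, ?_⟩
        simp [Int.toNat_of_nonneg hy0]
      obtain ⟨i, hi⟩ := (hcover _).1 hx
      obtain ⟨j, hj, hxe⟩ := mem_hseg.1 hi
      have h2 : (pos i).2 = y := by
        have := congrArg Prod.snd hxe
        simpa using this.symm
      exact ⟨i, h2, hi⟩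
    · rintro ⟨i, hiy, hx⟩
      have hx' : x ∈ rect w m := (hcover x).2 ⟨i, hx⟩
      obtain ⟨p, hp, q, hq, rfl⟩ := mem_rect.1 hx'
      obtain ⟨j, hj, hxe⟩ := mem_hseg.1 hx
      have hqy : (q : ℤ) = y := by
        have := congrArg Prod.snd hxe
        simp only at this
        rw [this, hiy]
      exact ⟨p, hp, by simp [hqy]⟩
  have hcard1 : ((Finset.range w).image (fun p : ℕ => ((p : ℤ), y))).card = w := by
    rw [Finset.card_image_of_injective, Finset.card_range]
    intro a b h
    simpa using h
  have hcard2 : (S.biUnion (fun i => hseg (pos i) (a i + 3 * m ^ 2))).card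
      = ∑ i ∈ S, (a i + 3 * m ^ 2) := by
    rw [Finset.card_biUnion (fun i _ j _ hij => hdisj i j hij)]
    exact Finset.sum_congr rfl fun i _ => hseg_card _ _
  have key : ∑ i ∈ S, (a i + 3 * m ^ 2) = w := by
    rw [← hcard2, ← hrow, hcard1]
  have hsplit : (∑ i ∈ S, a i) + S.card * (3 * m ^ 2) = B + 3 * (3 * m ^ 2) := by
    rw [Finset.sum_add_distrib, Finset.sum_const, smul_eq_mul, hw] at key
    linarith [key]
  have h2 : S.card * (B + 1) ≤ 4 * ∑ i ∈ S, a i := by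
    calc S.card * (B + 1) = ∑ _i ∈ S, (B + 1) := by rw [Finset.sum_const, smul_eq_mul]
    _ ≤ ∑ i ∈ S, 4 * a i := Finset.sum_le_sum fun i _ => by have := hlo i; omega
    _ = 4 * ∑ i ∈ S, a i := by rw [Finset.mul_sum]
  have h3 : 2 * (∑ i ∈ S, a i) + S.card ≤ S.card * B := by
    calc 2 * (∑ i ∈ S, a i) + S.card = ∑ i ∈ S, (2 * a i + 1) := by
          rw [Finset.sum_add_distrib, ← Finset.mul_sum, Finset.sum_const, smul_eq_mul, mul_one]
    _ ≤ ∑ _i ∈ S, B := Finset.sum_le_sum fun i _ => by have := hhi i; omega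
    _ = S.card * B := by rw [Finset.sum_const, smul_eq_mul]
  have hm2 : 1 ≤ 3 * m ^ 2 := by have := Nat.one_le_pow 2 m hm; linarith
  exact arith_aux S.card (∑ i ∈ S, a i) B (3 * m ^ 2) hm2 hsplit h2 h3
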